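/- Let G be a graph and F ⊆ E(G) a set of edges such that G/F is a cactus, with G/F-witness structure W of G. Then there exists a coloring f: V(G) → {1,2,3} that is compatible with W. -/

import Mathlib

open SimpleGraph

universe u v

/-- A cactus: a connected graph in which every edge lies on at most one cycle
(any two cycles through a common edge have the same edge set). -/
def IsCactus {V : Type u} (G : SimpleGraph V) : Prop :=
  G.Connected ∧ ∀ (e : Sym2 V) (a b : V) (c₁ : G.Walk a a) (c₂ : G.Walk b b),
    c₁.IsCycle → c₂.IsCycle → e ∈ c₁.edges → e ∈ c₂.edges →
    {e' | e' ∈ c₁.edges} = {e' | e' ∈ c₂.edges}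

/-- The graph `G/F` obtained by contracting the edges of `F`: its vertices are the
connected components of the subgraph spanned by the edges of `F` that lie in `G`. -/
def contract {V : Type u} (G : SimpleGraph V) (F : Set (Sym2 V)) :
    SimpleGraph (SimpleGraph.fromEdgeSet F ⊓ G).ConnectedComponent where
  Adj a b := a ≠ b ∧ ∃ x y : V, G.Adj x y ∧
      (SimpleGraph.fromEdgeSet F ⊓ G).connectedComponentMk x = a ∧
      (SimpleGraph.fromEdgeSet F ⊓ G).connectedComponentMk y = b
  symm := ⟨by
    rintro a b ⟨hne, x, y, hadj, hx, hy⟩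
    exact ⟨hne.symm, y, x, hadj.symm, hy, hx⟩⟩
  loopless := ⟨by
    rintro a ⟨hne, -⟩
    exact hne rfl⟩

/-- A cut-vertex of `G`: removing it disconnects the graph. -/
def IsCutVertex {V : Type u} (G : SimpleGraph V) (x : V) : Prop :=
  ¬ (G.induce ({x}ᶜ : Set V)).Connected

/-- 2-connected: connected, at least 3 vertices, no cut-vertex. -/
def TwoConnected {V : Type u} (G : SimpleGraph V) : Prop :=
  G.Connected ∧ 3 ≤ Nat.card V ∧ ∀ x : V, (G.induce ({x}ᶜ : Set V)).Connected

/-- A cable path: a path whose internal vertices are adjacent exactly to their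
two neighbours on the path. -/
def IsCablePath {V : Type u} (G : SimpleGraph V) (l : List V) : Prop :=
  l ≠ [] ∧ l.Nodup ∧ l.Chain' G.Adj ∧
  ∀ (i : ℕ) (h2 : i + 1 < l.length) (_h1 : 1 ≤ i) (y : V),
    G.Adj (l.get ⟨i, by omega⟩) y ↔
      (y = l.get ⟨i - 1, by omega⟩ ∨ y = l.get ⟨i + 1, h2⟩)

/-- `G` is contractible to `H` via `ψ`: preimages are connected witness sets and
`H`-adjacency corresponds to existence of crossing edges of `G`. -/
def IsContraction {V : Type u} {W : Type v} (G : SimpleGraph V) (H : SimpleGraph W)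
    (ψ : V → W) : Prop :=
  Function.Surjective ψ ∧
  (∀ t : W, (G.induce (ψ ⁻¹' {t})).Connected) ∧
  (∀ t t' : W, H.Adj t t' ↔ t ≠ t' ∧ ∃ x y : V, G.Adj x y ∧ ψ x = t ∧ ψ y = t')

/-- The witness set of `t` is big: it contains at least two vertices. -/
def BigWitness {V : Type u} {W : Type v} (ψ : V → W) (t : W) : Prop :=
  ∃ a b : V, a ≠ b ∧ ψ a = t ∧ ψ b = t

/-- A 3-colouring `f` of `V(G)` is compatible with the `T`-witness structure given by `ψ`:
witness sets are monochromatic, adjacent big witness sets get distinct colours, and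
endpoints of cable paths in `T` between two big witness sets through singleton witness
sets are coloured differently from their path-neighbours. -/
def Compatible {V : Type u} {W : Type v} (T : SimpleGraph W) (ψ : V → W)
    (f : V → Fin 3) : Prop :=
  (∀ x y : V, ψ x = ψ y → f x = f y) ∧
  (∀ t t' : W, BigWitness ψ t → BigWitness ψ t' → T.Adj t t' →
    ∀ x y : V, ψ x = t → ψ y = t' → f x ≠ f y) ∧
  (∀ l : List W, IsCablePath T l → ∀ (hlen : 3 ≤ l.length),
    BigWitness ψ (l.get ⟨0, by omega⟩) →
    BigWitness ψ (l.get ⟨l.length - 1, by omega⟩) →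
    (∀ (i : ℕ) (h : i < l.length), 1 ≤ i → i < l.length - 1 →
      ¬ BigWitness ψ (l.get ⟨i, h⟩)) →
    ((∀ x y : V, ψ x = l.get ⟨0, by omega⟩ → ψ y = l.get ⟨1, by omega⟩ → f x ≠ f y) ∧
     (∀ x y : V, ψ x = l.get ⟨l.length - 1, by omega⟩ →
        ψ y = l.get ⟨l.length - 2, by omega⟩ → f x ≠ f y)))

/-- The graph `G - Z`, seen as a graph on all of `V`: edges of `G` avoiding `Z`. -/
def restrictOutside {V : Type u} (G : SimpleGraph V) (Z : Set V) : SimpleGraph V where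
  Adj x y := G.Adj x y ∧ x ∉ Z ∧ y ∉ Z
  symm := ⟨by rintro x y ⟨h, hx, hy⟩; exact ⟨h.symm, hy, hx⟩⟩
  loopless := ⟨by rintro x ⟨h, -, -⟩; exact G.ne_of_adj h rfl⟩

/-- `Z` is a core of `G`: every connected component of `G - Z` is an isolated vertex
or (the vertex set of) a cable path of `G`. -/
def IsCore {V : Type u} (G : SimpleGraph V) (Z : Set V) : Prop :=
  ∀ x ∉ Z, {u | (restrictOutside G Z).Reachable x u} = {x} ∨
    ∃ l : List V, IsCablePath G l ∧
      {u | (restrictOutside G Z).Reachable x u} = {u | u ∈ l}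

/-- A connected core. -/
def IsConnectedCore {V : Type u} (G : SimpleGraph V) (Z : Set V) : Prop :=
  (G.induce Z).Connected ∧ IsCore G Z

/-- `B` induces a nonempty connected subgraph without cut-vertices. -/
def NoCutVertexSet {V : Type u} (G : SimpleGraph V) (B : Set V) : Prop :=
  B.Nonempty ∧ (G.induce B).Connected ∧
  ∀ x ∈ B, (B \ {x}).Nonempty → (G.induce (B \ {x})).Connected

/-- A block of `G`: a maximal set inducing a connected subgraph without cut-vertices. -/
def IsBlock {V : Type u} (G : SimpleGraph V) (B : Set V) : Prop :=
  NoCutVertexSet G B ∧ ∀ B' : Set V, B ⊆ B' → NoCutVertexSet G B' → B = B'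

/-- `B` is the vertex set of an induced cycle of `G`. -/
def IsCycleSet {V : Type u} (G : SimpleGraph V) (B : Set V) : Prop :=
  ∃ (a : V) (c : G.Walk a a), c.IsCycle ∧ {x | x ∈ c.support} = B ∧
    ∀ x ∈ B, ∀ y ∈ B, G.Adj x y → s(x, y) ∈ c.edges

/-- `G` can be turned into a cactus by contracting at most `k` edges. -/
def KContractibleToCactus {V : Type u} (G : SimpleGraph V) (k : ℕ) : Prop :=
  ∃ F : Set (Sym2 V), F ⊆ G.edgeSet ∧ F.ncard ≤ k ∧ IsCactus (contract G F)

/-- `G` has a tree decomposition of width at most `w`. -/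
def HasTreewidthAtMost {V : Type u} (G : SimpleGraph V) (w : ℕ) : Prop :=
  ∃ (ι : Type u) (T : SimpleGraph ι) (β : ι → Set V),
    T.Connected ∧ T.IsAcyclic ∧
    (∀ x : V, ∃ i, x ∈ β i) ∧
    (∀ ⦃x y : V⦄, G.Adj x y → ∃ i, x ∈ β i ∧ y ∈ β i) ∧
    (∀ (x : V) (i j : ι), x ∈ β i → x ∈ β j →
      ∀ p : T.Walk i j, p.IsPath → ∀ z ∈ p.support, x ∈ β z) ∧
    (∀ i, (β i).ncard ≤ w + 1)

/-!
Colour every witness set by the colour of its vertex in a proper 3-colouring of `G/F`: all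
three compatibility conditions then only ask that adjacent vertices of `G/F` get distinct colours.

A graph in which no edge lies on two distinct cycles is 3-colourable. In the finite case, let
`v x …` be a longest path: every neighbour of `v` lies on it, and two neighbours `u₁ ≠ u₂` other
than `x` would close two cycles through `vx` that differ in the edge `u₁v`. So some vertex has
degree at most two, and induction on the number of vertices applies. The infinite case follows
by the De Bruijn–Erdős compactness theorem.
-/

namespace SimpleGraph

variable {α β : Type*} {G : SimpleGraph α}

def EdgeOnAtMostOneCycle (G : SimpleGraph α) : Prop :=
  ∀ (e : Sym2 α) (a b : α) (c₁ : G.Walk a a) (c₂ : G.Walk b b),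
    c₁.IsCycle → c₂.IsCycle → e ∈ c₁.edges → e ∈ c₂.edges →
    {e' | e' ∈ c₁.edges} = {e' | e' ∈ c₂.edges}

theorem EdgeOnAtMostOneCycle.comap {H : SimpleGraph β} (hG : G.EdgeOnAtMostOneCycle)
    (f : H →g G) (hf : Function.Injective f) : H.EdgeOnAtMostOneCycle := by
  intro e a b c₁ c₂ h₁ h₂ he₁ he₂
  have edges_map : ∀ {x : β} (c : H.Walk x x),
      {e' | e' ∈ (c.map f).edges} = Sym2.map f '' {e' | e' ∈ c.edges} := by
    intro x c
    ext
    simp [Walk.edges_map]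
  apply Set.image_injective.mpr (Sym2.map.injective hf)
  rw [← edges_map, ← edges_map]
  exact hG (Sym2.map f e) _ _ _ _ (h₁.map hf) (h₂.map hf)
    (by rw [Walk.edges_map]; exact List.mem_map_of_mem he₁)
    (by rw [Walk.edges_map]; exact List.mem_map_of_mem he₂)

theorem Walk.IsPath.eq_of_mem_edges_cons {u v w y : α} {h : G.Adj u v} {p : G.Walk v w}
    (hp : (Walk.cons h p).IsPath) (hy : s(y, u) ∈ (Walk.cons h p).edges) : y = v := by
  rw [Walk.edges_cons, List.mem_cons] at hy
  rcases hy with hy | hy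
  · rcases Sym2.eq_iff.mp hy with ⟨rfl, rfl⟩ | ⟨rfl, -⟩
    · exact (G.loopless.irrefl _ h).elim
    · rfl
  · exact ((Walk.cons_isPath_iff h p).mp hp).2 (p.snd_mem_support_of_mem_edges hy) |>.elim

theorem Walk.IsPath.exists_isCycle_of_adj_start {u v w x : α} {hx : G.Adj v x}
    {p : G.Walk x w} (hp : (Walk.cons hx p).IsPath) (hu : G.Adj v u) (hux : u ≠ x)
    (hsupp : u ∈ (Walk.cons hx p).support) :
    ∃ c : G.Walk u u, c.IsCycle ∧ s(v, x) ∈ c.edges ∧ s(u, v) ∈ c.edges ∧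
      ∀ y, s(y, v) ∈ c.edges → y = u ∨ y = x := by
  classical
  set q := (Walk.cons hx p).takeUntil u hsupp
  have edges_q : ∀ y, s(y, v) ∈ q.edges → y = x := fun y hy =>
    hp.eq_of_mem_edges_cons (Walk.edges_takeUntil_subset_edges _ hsupp hy)
  refine ⟨Walk.cons hu.symm q, ?_, ?_, by simp, ?_⟩
  · exact Path.cons_isCycle ⟨q, hp.takeUntil hsupp⟩ hu.symm fun h => hux (edges_q u h)
  · have hvu : v ≠ u := G.ne_of_adj hu
    simp [q, Walk.takeUntil, hvu]
  · intro y hy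
    rw [Walk.edges_cons, List.mem_cons] at hy
    rcases hy with hy | hy
    · rcases Sym2.eq_iff.mp hy with ⟨rfl, -⟩ | ⟨rfl, rfl⟩
      · exact .inl rfl
      · exact (G.loopless.irrefl _ hu).elim
    · exact .inr (edges_q y hy)

theorem EdgeOnAtMostOneCycle.exists_degree_le_two [Fintype α] [Nonempty α] [DecidableRel G.Adj]
    (hG : G.EdgeOnAtMostOneCycle) : ∃ v, G.degree v ≤ 2 := by
  classical
  obtain ⟨v, w, p, hp, hmax⟩ := Walk.exists_isPath_forall_isPath_length_le_length G
  refine ⟨v, ?_⟩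
  by_contra! hdeg
  have nbr_mem : ∀ u, G.Adj v u → u ∈ p.support := by
    intro u hu
    by_contra hu'
    have := hmax _ _ _ ((Walk.cons_isPath_iff hu.symm p).2 ⟨hp, hu'⟩)
    simp at this
  cases p with
  | nil =>
    obtain ⟨u, hu⟩ := (G.degree_pos_iff_exists_adj v).mp (by omega)
    have : u = v := by simpa using nbr_mem u hu
    exact G.ne_of_adj hu this.symm
  | @cons _ x _ hx p =>
    have : 1 < ((G.neighborFinset v).erase x).card := by
      rw [Finset.card_erase_of_mem ((G.mem_neighborFinset v x).2 hx), card_neighborFinset_eq_degree]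
      omega
    obtain ⟨u₁, hu₁, u₂, hu₂, hne⟩ := Finset.one_lt_card.mp this
    simp only [Finset.mem_erase, mem_neighborFinset] at hu₁ hu₂
    obtain ⟨c₁, hc₁, hx₁, hu₁v, -⟩ :=
      hp.exists_isCycle_of_adj_start hu₁.2 hu₁.1 (nbr_mem _ hu₁.2)
    obtain ⟨c₂, hc₂, hx₂, -, hv₂⟩ :=
      hp.exists_isCycle_of_adj_start hu₂.2 hu₂.1 (nbr_mem _ hu₂.2)
    have hu₁v' : s(u₁, v) ∈ c₂.edges :=
      (Set.ext_iff.mp (hG _ _ _ c₁ c₂ hc₁ hc₂ hx₁ hx₂) _).mp hu₁v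
    rcases hv₂ u₁ hu₁v' with h | h
    · exact hne h
    · exact hu₁.1 h

theorem Colorable.of_induce_compl_singleton {v : α} [Fintype (G.neighborSet v)] {n : ℕ}
    (hc : (G.induce {v}ᶜ).Colorable n) (hv : G.degree v < n) : G.Colorable n := by
  classical
  obtain ⟨C⟩ := hc
  have ne_v : ∀ w ∈ G.neighborFinset v, w ∈ ({v}ᶜ : Set α) := fun w hw =>
    (G.ne_of_adj ((G.mem_neighborFinset v w).mp hw)).symm
  let used : Finset (Fin n) := (G.neighborFinset v).attach.image fun w => C ⟨w.1, ne_v w.1 w.2⟩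
  have hused : used.card < (Finset.univ : Finset (Fin n)).card := by
    calc used.card ≤ (G.neighborFinset v).attach.card := Finset.card_image_le
      _ = G.degree v := by rw [Finset.card_attach, card_neighborFinset_eq_degree]
      _ < _ := by simpa using hv
  obtain ⟨c, -, hc⟩ := Finset.exists_mem_notMem_of_card_lt_card hused
  have hc' : ∀ w (hw : w ≠ v), G.Adj v w → C ⟨w, hw⟩ ≠ c := fun w hw hvw h =>
    hc (Finset.mem_image.mpr ⟨⟨w, (G.mem_neighborFinset v w).mpr hvw⟩, Finset.mem_attach _ _, h⟩)
  refine ⟨Coloring.mk (fun x => if hx : x = v then c else C ⟨x, hx⟩) fun {x y} hxy => ?_⟩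
  by_cases hx : x = v <;> by_cases hy : y = v
  · exact (G.ne_of_adj hxy (hx.trans hy.symm)).elim
  · subst hx; simpa [hy] using (hc' y hy hxy).symm
  · subst hy; simpa [hx] using hc' x hx hxy.symm
  · simpa [hx, hy] using C.valid (G.induce_adj.mpr hxy : (G.induce {v}ᶜ).Adj ⟨x, hx⟩ ⟨y, hy⟩)

theorem EdgeOnAtMostOneCycle.colorable_three_of_finite [Finite α]
    (hG : G.EdgeOnAtMostOneCycle) : G.Colorable 3 := by
  induction h : Nat.card α using Nat.strong_induction_on generalizing α with
  | _ n ih =>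
  classical
  cases isEmpty_or_nonempty α
  · exact .of_isEmpty 3
  have := Fintype.ofFinite α
  obtain ⟨v, hv⟩ := hG.exists_degree_le_two
  have hcard : Nat.card ({v}ᶜ : Set α) < n := by
    rw [← h, Nat.card_coe_set_eq, Set.ncard_compl, Set.ncard_singleton]
    have := Nat.card_pos (α := α)
    omega
  let ι : G.induce {v}ᶜ ↪g G := Embedding.induce _
  exact (ih _ hcard (hG.comap ι.toHom ι.injective) rfl).of_induce_compl_singleton (by omega)

theorem colorable_of_forall_finite_subgraph_colorable {n : ℕ}
    (h : ∀ G' : G.Subgraph, G'.verts.Finite → G'.coe.Colorable n) : G.Colorable n :=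
  nonempty_hom_of_forall_finite_subgraph_hom fun G' hG' => (h G' hG').some

theorem EdgeOnAtMostOneCycle.colorable_three (hG : G.EdgeOnAtMostOneCycle) : G.Colorable 3 :=
  colorable_of_forall_finite_subgraph_colorable fun G' hG' =>
    have := hG'.to_subtype
    (hG.comap G'.hom Subgraph.hom_injective).colorable_three_of_finite

end SimpleGraph

theorem IsCactus.edgeOnAtMostOneCycle {V : Type*} {G : SimpleGraph V} (hG : IsCactus G) :
    G.EdgeOnAtMostOneCycle :=
  hG.2

theorem SimpleGraph.Coloring.compatible_comp {V W : Type*} {T : SimpleGraph W}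
    (C : T.Coloring (Fin 3)) (ψ : V → W) : Compatible T ψ (C ∘ ψ) := by
  refine ⟨fun x y h => congrArg C h, ?_, ?_⟩
  · rintro t t' - - ht x y rfl rfl
    exact C.valid ht
  · rintro l ⟨-, -, hchain, -⟩ hlen - - -
    have adj := List.isChain_iff_getElem.mp hchain
    refine ⟨?_, ?_⟩
    · rintro x y hx hy
      simpa [hx, hy] using C.valid (adj 0 (by omega))
    · rintro x y hx hy
      have h := C.valid (adj (l.length - 2) (by omega))
      simp only [show l.length - 2 + 1 = l.length - 1 by omega] at h
      simpa [hx, hy] using h.symm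

theorem stmt7_general {V : Type u} (G : SimpleGraph V) (F : Set (Sym2 V))
    (hT : IsCactus (contract G F)) :
    ∃ f : V → Fin 3,
      Compatible (contract G F) (SimpleGraph.fromEdgeSet F ⊓ G).connectedComponentMk f := by
  obtain ⟨C⟩ := hT.edgeOnAtMostOneCycle.colorable_three
  exact ⟨_, C.compatible_comp _⟩

/-- If `G/F` is a cactus then there is a 3-colouring of `V(G)` compatible with the
`G/F`-witness structure of `G`. -/
theorem stmt7 {V : Type u} (G : SimpleGraph V) (F : Set (Sym2 V))
    (hF : F ⊆ G.edgeSet) (hT : IsCactus (contract G F)) :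
    ∃ f : V → Fin 3,
      Compatible (contract G F) (SimpleGraph.fromEdgeSet F ⊓ G).connectedComponentMk f :=
  stmt7_general G F hT
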